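/- Every nonzero element of ker(φ(n,2)) has degree at least n+2 with respect to the grading of F(n,2) given by deg ρ_α = 2 and deg π_β = n; that is, the homogeneous component ker(φ(n,2))_d is zero for all d < n+2. In particular, q_{2,0}, q_{1,1}, q_{0,2} are algebraically independent over ℂ. -/

import Mathlib

open MvPolynomial

noncomputable section

/-- `ℂ[V^m]` for `V = ℂ²`: variable `(0, i)` is `xᵢ`, variable `(1, i)` is `yᵢ`. -/
abbrev PolyVm (m : ℕ) : Type := MvPolynomial (Fin 2 × Fin m) ℂ

/-- A `Finsupp` on `Fin m` built from a tuple. -/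
def fsOf {m : ℕ} (v : Fin m → ℕ) : Fin m →₀ ℕ := Finsupp.equivFunOnFinite.symm v

@[simp] lemma fsOf_apply {m : ℕ} (v : Fin m → ℕ) (i : Fin m) : fsOf v i = v i := rfl

lemma fsOf_sum2 (a b : ℕ) : ∑ i, fsOf ![a, b] i = a + b := by
  simp [Fin.sum_univ_two]

lemma fsOf_sum3 (a b c : ℕ) : ∑ i, fsOf ![a, b, c] i = a + b + c := by
  simp [Fin.sum_univ_three]

/-- The polarization `p_β = x^β + y^β` of `p = xⁿ + yⁿ`. -/
def pPoly {m : ℕ} (β : Fin m →₀ ℕ) : PolyVm m :=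
  (∏ i, X (0, i) ^ β i) + (∏ i, X (1, i) ^ β i)

/-- The polarization `q_α` of `q = xy` : `q_{2eᵢ} = xᵢyᵢ` and
`q_{eᵢ+eⱼ} = (xᵢyⱼ + xⱼyᵢ)/2` for `i ≠ j`. -/
def qPoly {m : ℕ} (α : Fin m →₀ ℕ) : PolyVm m :=
  ((((Finset.univ.filter fun ij : Fin m × Fin m =>
      Finsupp.single ij.1 1 + Finsupp.single ij.2 1 = α).card : ℕ) : ℂ))⁻¹ •
  ∑ ij ∈ Finset.univ.filter (fun ij : Fin m × Fin m =>
      Finsupp.single ij.1 1 + Finsupp.single ij.2 1 = α),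
    X (0, ij.1) * X (1, ij.2)

/-- Variables of the free symmetric algebra `F(n,m)`: `ρ_α` for `|α| = 2`
(left summand) and `π_β` for `|β| = n` (right summand). -/
abbrev FVar (n m : ℕ) : Type :=
  {d : Fin m →₀ ℕ // ∑ i, d i = 2} ⊕ {d : Fin m →₀ ℕ // ∑ i, d i = n}

/-- The polynomial algebra `F(n,m) = ℂ[ρ_α, π_β]`. -/
abbrev FAlg (n m : ℕ) : Type := MvPolynomial (FVar n m) ℂ

/-- The canonical surjection `φ(n,m) : F(n,m) → ℂ[V^m]^{D_{2n}} ⊆ ℂ[V^m]`,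
`ρ_α ↦ q_α`, `π_β ↦ p_β`. -/
def phi (n m : ℕ) : FAlg n m →ₐ[ℂ] PolyVm m :=
  aeval (Sum.elim (fun a => qPoly a.1) (fun b => pPoly b.1))

/-- The weights of the grading of `F(n,m)`: `deg ρ_α = 2`, `deg π_β = n`. -/
def wF (n m : ℕ) : FVar n m → ℕ := Sum.elim (fun _ => 2) (fun _ => n)

/-- The matrix `diag(ω, ω⁻¹)`. -/
def dMat (ω : ℂ) : Matrix (Fin 2) (Fin 2) ℂ := !![ω, 0; 0, ω⁻¹]

/-- The matrix `((0,1),(1,0))`. -/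
def sMat : Matrix (Fin 2) (Fin 2) ℂ := !![0, 1; 1, 0]

/-- The action of a `2×2` matrix `g` on `ℂ[V^m]` (diagonal action on the `m`
vector variables): `x_{a,i} ↦ ∑_b g_{a b} x_{b,i}`. -/
def actG {m : ℕ} (g : Matrix (Fin 2) (Fin 2) ℂ) : PolyVm m →ₐ[ℂ] PolyVm m :=
  aeval fun p => ∑ b : Fin 2, g p.1 b • X (b, p.2)

/-- The subalgebra of `ℂ[V^m]` of polynomials invariant under (the group
generated by) a set `S` of `2×2` matrices. -/
def invAlg (m : ℕ) (S : Set (Matrix (Fin 2) (Fin 2) ℂ)) : Subalgebra ℂ (PolyVm m) where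
  carrier := {f | ∀ g ∈ Submonoid.closure S, actG g f = f}
  mul_mem' := fun ha hb => by
    intro g hg
    rw [map_mul, ha g hg, hb g hg]
  add_mem' := fun ha hb => by
    intro g hg
    rw [map_add, ha g hg, hb g hg]
  algebraMap_mem' := fun c => by
    intro g hg
    exact (actG g).commutes c

/-- The invariant algebra `ℂ[V^m]^{D_{2n}}`, where `D_{2n}` is generated by
`diag(ω, ω⁻¹)` and `((0,1),(1,0))`. -/
def dihedralInv (m : ℕ) (ω : ℂ) : Subalgebra ℂ (PolyVm m) :=
  invAlg m {dMat ω, sMat}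


/-- Padding of a multi-index in `ℕ^l` by zeros to a multi-index in `ℕ^m`, `l ≤ m`. -/
def padIdx {l m : ℕ} (h : l ≤ m) (d : Fin l →₀ ℕ) : Fin m →₀ ℕ :=
  fsOf fun i => if hi : (i : ℕ) < l then d ⟨i, hi⟩ else 0

lemma padIdx_sum {l m : ℕ} (h : l ≤ m) (d : Fin l →₀ ℕ) :
    ∑ i, padIdx h d i = ∑ i, d i := by
  have h1 : ∑ i : Fin m, padIdx h d i
      = ∑ k ∈ Finset.range m, (fun k => if hk : k < l then d ⟨k, hk⟩ else 0) k := by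
    simp only [padIdx, fsOf_apply]
    exact Fin.sum_univ_eq_sum_range (fun k => if hk : k < l then d ⟨k, hk⟩ else 0) m
  have h3 : ∑ k ∈ Finset.range l, (fun k => if hk : k < l then d ⟨k, hk⟩ else 0) k
      = ∑ k ∈ Finset.range m, (fun k => if hk : k < l then d ⟨k, hk⟩ else 0) k := by
    apply Finset.sum_subset (Finset.range_subset_range.2 h)
    intro k _ hk
    have hkl : ¬ k < l := by simpa using hk
    simp [hkl]
  have h2 : ∑ k ∈ Finset.range l, (fun k => if hk : k < l then d ⟨k, hk⟩ else 0) k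
      = ∑ i : Fin l, d i := by
    rw [← Fin.sum_univ_eq_sum_range (fun k => if hk : k < l then d ⟨k, hk⟩ else 0) l]
    exact Finset.sum_congr rfl fun i _ => by simp [i.2]
  rw [h1, ← h3, h2]

/-- The embedding `F(n,l) → F(n,m)` on variables, padding multi-indices with zeros. -/
def padVar (n : ℕ) {l m : ℕ} (h : l ≤ m) : FVar n l → FVar n m :=
  Sum.elim (fun a => Sum.inl ⟨padIdx h a.1, by rw [padIdx_sum h]; exact a.2⟩)
           (fun b => Sum.inr ⟨padIdx h b.1, by rw [padIdx_sum h]; exact b.2⟩)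

/-- The embedding `F(n,l) → F(n,m)` (padding multi-indices with zeros). -/
def padF (n : ℕ) {l m : ℕ} (h : l ≤ m) : FAlg n l →ₐ[ℂ] FAlg n m :=
  rename (padVar n h)

/-- Substitution action of an `m×m` matrix on `ℂ[z₁,…,z_m]`: `z_j ↦ ∑_i g_{ij} z_i`. -/
def aSub {m : ℕ} (g : Matrix (Fin m) (Fin m) ℂ) :
    MvPolynomial (Fin m) ℂ →ₐ[ℂ] MvPolynomial (Fin m) ℂ :=
  aeval fun j => ∑ i, g i j • X i

/-- Rewriting a homogeneous polynomial of degree `2` in `ℂ[z₁,…,z_m]` as a linear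
combination of the variables `ρ_γ` of `F(n,m)`. -/
def lift2 (n m : ℕ) (P : MvPolynomial (Fin m) ℂ) : FAlg n m :=
  ∑ d ∈ P.support, if h : (∑ i, d i) = 2 then P.coeff d • X (Sum.inl ⟨d, h⟩) else 0

/-- Rewriting a homogeneous polynomial of degree `n` in `ℂ[z₁,…,z_m]` as a linear
combination of the variables `π_δ` of `F(n,m)`. -/
def liftn (n m : ℕ) (P : MvPolynomial (Fin m) ℂ) : FAlg n m :=
  ∑ d ∈ P.support, if h : (∑ i, d i) = n then P.coeff d • X (Sum.inr ⟨d, h⟩) else 0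

/-- The action of the matrix `g` on `F(n,m)`: under the identifications
`ρ_α ↔ z^α` (`|α| = 2`) and `π_β ↔ z^β` (`|β| = n`) it is the substitution action
`z_j ↦ ∑_i g_{ij} z_i`; equivalently `g·ρ_α = ∑ c_{α,γ}(g) ρ_γ` and
`g·π_β = ∑ d_{β,δ}(g) π_δ` with the coefficients coming from `g·q_α = ∑ c_{α,γ}(g) q_γ`
and `g·p_β = ∑ d_{β,δ}(g) p_δ`. -/
def glF (n m : ℕ) (g : Matrix (Fin m) (Fin m) ℂ) : FAlg n m →ₐ[ℂ] FAlg n m :=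
  aeval (Sum.elim (fun a => lift2 n m (aSub g (monomial a.1 1)))
                  (fun b => liftn n m (aSub g (monomial b.1 1))))

/-- An ideal of `F(n,m)` stable under the action of `GL_m(ℂ)`. -/
def GLStable (n m : ℕ) (I : Ideal (FAlg n m)) : Prop :=
  ∀ g : GL (Fin m) ℂ, ∀ u ∈ I, glF n m (g : Matrix (Fin m) (Fin m) ℂ) u ∈ I

/-- The smallest `GL_m(ℂ)`-stable ideal of `F(n,m)` containing a set `S`. -/
def glSpan (n m : ℕ) (S : Set (FAlg n m)) : Ideal (FAlg n m) :=
  sInf {I : Ideal (FAlg n m) | S ⊆ ↑I ∧ GLStable n m I}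


/-- `p_{a,b} = x₁^a x₂^b + y₁^a y₂^b` in `ℂ[x₁,y₁,x₂,y₂]`. -/
def pp (a b : ℕ) : PolyVm 2 := X (0,0) ^ a * X (0,1) ^ b + X (1,0) ^ a * X (1,1) ^ b

/-- `q_{2,0} = x₁y₁`. -/
def q20 : PolyVm 2 := X (0,0) * X (1,0)

/-- `q_{0,2} = x₂y₂`. -/
def q02 : PolyVm 2 := X (0,1) * X (1,1)

/-- `q_{1,1} = (x₁y₂ + x₂y₁)/2`. -/
def q11 : PolyVm 2 := C (1/2 : ℂ) * (X (0,0) * X (1,1) + X (0,1) * X (1,0))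

/-- The variable `ρ_{(a,b,0,…,0)}` of `F(n,m)`, `m ≥ 2`, `a+b = 2`. -/
def rhoPad2 (n : ℕ) {m : ℕ} (hm : 2 ≤ m) (a b : ℕ) (h : a + b = 2) : FAlg n m :=
  X (Sum.inl ⟨padIdx hm (fsOf ![a, b]), by rw [padIdx_sum, fsOf_sum2]; exact h⟩)

/-- The variable `π_{(a,b,0,…,0)}` of `F(n,m)`, `m ≥ 2`, `a+b = n`. -/
def piPad2 (n : ℕ) {m : ℕ} (hm : 2 ≤ m) (a b : ℕ) (h : a + b = n) : FAlg n m :=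
  X (Sum.inr ⟨padIdx hm (fsOf ![a, b]), by rw [padIdx_sum, fsOf_sum2]; exact h⟩)

/-- The relation `R(n)_{n,2} = π_{n,0}ρ_{0,2} − 2π_{n−1,1}ρ_{1,1} + π_{n−2,2}ρ_{2,0}`,
viewed in `F(n,m)` for any `m ≥ 2`. -/
def Rn2 (n : ℕ) (hn : 3 ≤ n) {m : ℕ} (hm : 2 ≤ m) : FAlg n m :=
  piPad2 n hm n 0 (by omega) * rhoPad2 n hm 0 2 (by omega)
    - 2 * piPad2 n hm (n-1) 1 (by omega) * rhoPad2 n hm 1 1 (by omega)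
    + piPad2 n hm (n-2) 2 (by omega) * rhoPad2 n hm 2 0 (by omega)

/-- The relation `R(n)_{2n−2k,2k}` for `1 ≤ k ≤ ⌊n/2⌋`, viewed in `F(n,m)`, `m ≥ 2`:
`(−1)^k ½ C(2k,k) π_{n−k,k}² + ∑_{j=0}^{k−1} (−1)^j C(2k,j) π_{n−j,j} π_{n−2k+j,2k−j}
  − 4^k ρ_{2,0}^{n−2k} (ρ_{1,1}² − ρ_{2,0}ρ_{0,2})^k`. -/
def Rnk (n k : ℕ) (hn : 3 ≤ n) (hk1 : 1 ≤ k) (hk2 : k ≤ n / 2) {m : ℕ} (hm : 2 ≤ m) :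
    FAlg n m :=
  C ((-1 : ℂ) ^ k * ((2*k).choose k : ℂ) / 2) * piPad2 n hm (n-k) k (by omega) ^ 2
    + ∑ j ∈ (Finset.range k).attach,
        C ((-1 : ℂ) ^ (j : ℕ) * ((2*k).choose (j : ℕ) : ℂ)) *
          (piPad2 n hm (n - (j : ℕ)) (j : ℕ)
              (by have := Finset.mem_range.mp j.2; omega) *
           piPad2 n hm (n - 2*k + (j : ℕ)) (2*k - (j : ℕ))
              (by have := Finset.mem_range.mp j.2; omega))
    - C ((4 : ℂ) ^ k) * rhoPad2 n hm 2 0 (by omega) ^ (n - 2*k) *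
        (rhoPad2 n hm 1 1 (by omega) ^ 2
          - rhoPad2 n hm 2 0 (by omega) * rhoPad2 n hm 0 2 (by omega)) ^ k



/-- exponent of x1^(a+j) y1^(a+b-j) x2^(b+c-j) y2^(j+c) -/
def EE (a b c j : ℕ) : (Fin 2 × Fin 2) →₀ ℕ :=
  Finsupp.single (0,0) (a+j) + Finsupp.single (1,0) (a+b-j)
    + Finsupp.single (0,1) (b+c-j) + Finsupp.single (1,1) (j+c)

lemma EE_apply (a b c j : ℕ) (v : Fin 2 × Fin 2) :
    EE a b c j v = if v = (0,0) then a+j else if v = (1,0) then a+b-j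
      else if v = (0,1) then b+c-j else j+c := by
  obtain ⟨i, k⟩ := v
  fin_cases i <;> fin_cases k <;>
    simp [EE, Finsupp.single_apply, Prod.ext_iff]

lemma X_mul_X (u v : Fin 2 × Fin 2) :
    (X u * X v : PolyVm 2) = monomial (Finsupp.single u 1 + Finsupp.single v 1) 1 := by
  rw [X, X, monomial_mul, one_mul]



lemma expand (a b c : ℕ) :
    q20 ^ a * q11 ^ b * q02 ^ c =
      ∑ j ∈ Finset.range (b+1),
        monomial (EE a b c j) ((1/2 : ℂ) ^ b * (b.choose j : ℂ)) := by
  have h20 : q20 ^ a = monomial (Finsupp.single ((0:Fin 2),(0:Fin 2)) a + Finsupp.single (1,0) a) 1 := by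
    rw [q20, X_mul_X, monomial_pow, one_pow, smul_add, Finsupp.smul_single, Finsupp.smul_single,
      smul_eq_mul, mul_one]
  have h02 : q02 ^ c = monomial (Finsupp.single ((0:Fin 2),(1:Fin 2)) c + Finsupp.single (1,1) c) 1 := by
    rw [q02, X_mul_X, monomial_pow, one_pow, smul_add, Finsupp.smul_single, Finsupp.smul_single,
      smul_eq_mul, mul_one]
  have h11 : q11 ^ b = C ((1/2:ℂ)^b) * ∑ j ∈ Finset.range (b+1),
      monomial (Finsupp.single ((0:Fin 2),(0:Fin 2)) j + Finsupp.single (1,1) j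
        + (Finsupp.single (0,1) (b-j) + Finsupp.single (1,0) (b-j))) ((b.choose j : ℂ)) := by
    rw [q11, X_mul_X, X_mul_X, mul_pow, ← C_pow, add_pow]
    congr 1
    refine Finset.sum_congr rfl fun j hj => ?_
    simp only [monomial_pow, monomial_mul, one_pow, one_mul, smul_add, Finsupp.smul_single,
      smul_eq_mul, mul_one]
    rw [← C_eq_coe_nat, mul_comm, C_mul_monomial, mul_one]
  rw [h20, h11, h02, Finset.mul_sum, Finset.mul_sum, Finset.sum_mul]
  refine Finset.sum_congr rfl fun j hj => ?_
  have hj' : j ≤ b := Nat.lt_succ_iff.mp (Finset.mem_range.mp hj)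
  rw [C_mul_monomial, monomial_mul, monomial_mul, one_mul]
  congr 1
  · have h1 : a + b - j = a + (b - j) := by omega
    have h2 : b + c - j = (b - j) + c := by omega
    rw [EE, h1, h2, Finsupp.single_add, Finsupp.single_add, Finsupp.single_add,
      Finsupp.single_add]
    abel
  · ring

lemma EE_congr {a b c a' b' c' j' : ℕ} (hj : j' ≤ b') (hb : b' ≤ b)
    (h : EE a' b' c' j' = EE a b c b) : a' = a ∧ b' = b ∧ c' = c ∧ j' = b := by
  have h00 := DFunLike.congr_fun h ((0:Fin 2),(0:Fin 2))
  have h10 := DFunLike.congr_fun h ((1:Fin 2),(0:Fin 2))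
  have h01 := DFunLike.congr_fun h ((0:Fin 2),(1:Fin 2))
  have h11 := DFunLike.congr_fun h ((1:Fin 2),(1:Fin 2))
  simp only [EE_apply] at h00 h10 h01 h11
  norm_num at h00 h10 h01 h11
  omega

lemma coeff_EE_target (a b c a' b' c' : ℕ) (hb : b' ≤ b) :
    coeff (EE a b c b) (q20 ^ a' * q11 ^ b' * q02 ^ c') =
      if a' = a ∧ b' = b ∧ c' = c then (1/2 : ℂ)^b else 0 := by
  rw [expand, coeff_sum]
  simp only [coeff_monomial]
  by_cases hC : a' = a ∧ b' = b ∧ c' = c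
  · obtain ⟨rfl, rfl, rfl⟩ := hC
    rw [if_pos ⟨rfl, rfl, rfl⟩, Finset.sum_eq_single b']
    · rw [if_pos rfl, Nat.choose_self, Nat.cast_one, mul_one]
    · intro j hj hne
      rw [if_neg]
      intro hEE
      exact hne (EE_congr (Nat.lt_succ_iff.mp (Finset.mem_range.mp hj)) le_rfl hEE).2.2.2
    · intro hb'
      exact absurd (Finset.self_mem_range_succ b') hb'
  · rw [if_neg hC]
    refine Finset.sum_eq_zero fun j hj => ?_
    rw [if_neg]
    intro hEE
    obtain ⟨h1, h2, h3, _⟩ := EE_congr (Nat.lt_succ_iff.mp (Finset.mem_range.mp hj)) hb hEE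
    exact hC ⟨h1, h2, h3⟩

lemma qIndepAux (P : MvPolynomial (Fin 3) ℂ) (h : aeval ![q20,q11,q02] P = 0) : P = 0 := by
  by_contra hP
  obtain ⟨M, hM, hMb⟩ := Finset.exists_mem_eq_sup P.support (support_nonempty.mpr hP)
    (fun m => m 1)
  set b := P.support.sup (fun m => m 1) with hbdef
  have key : aeval ![q20,q11,q02] P =
      ∑ m ∈ P.support, C (coeff m P) * (q20 ^ m 0 * q11 ^ m 1 * q02 ^ m 2) := by
    conv_lhs => rw [P.as_sum]
    rw [map_sum]
    refine Finset.sum_congr rfl fun m _ => ?_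
    rw [aeval_monomial, Finsupp.prod_pow, Fin.prod_univ_three]
    simp only [Matrix.cons_val_zero, Matrix.cons_val_one, Matrix.head_cons, algebraMap_eq,
      Matrix.cons_val_two, Matrix.tail_cons, mul_assoc]
  have hco := congrArg (coeff (EE (M 0) b (M 2) b)) (key.symm.trans h)
  rw [coeff_zero, coeff_sum] at hco
  simp only [coeff_C_mul] at hco
  rw [Finset.sum_eq_single M] at hco
  · rw [coeff_EE_target _ _ _ _ _ _ (le_of_eq hMb.symm), hMb,
      if_pos ⟨rfl, rfl, rfl⟩] at hco
    have : coeff M P = 0 := by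
      have h2 : ((1/2 : ℂ))^b ≠ 0 := by norm_num
      field_simp at hco
      exact (mul_eq_zero.mp hco).resolve_right (by norm_num)
    exact (mem_support_iff.mp hM) this
  · intro m hm hne
    rw [coeff_EE_target _ _ _ _ _ _ (hbdef ▸ Finset.le_sup (f := fun m => m 1) hm), if_neg,
      mul_zero]
    rintro ⟨h0, h1, h2⟩
    exact hne (Finsupp.ext fun t => by fin_cases t <;> simp_all [hMb.symm])
  · intro hM'
    exact absurd hM hM'


lemma fin2_finsupp_eq_iff (dd ee : Fin 2 →₀ ℕ) : dd = ee ↔ dd 0 = ee 0 ∧ dd 1 = ee 1 :=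
  ⟨fun h => by rw [h]; exact ⟨rfl, rfl⟩,
   fun h => Finsupp.ext fun t => by fin_cases t <;> [exact h.1; exact h.2]⟩

lemma filter20 :
    (Finset.univ.filter fun ij : Fin 2 × Fin 2 =>
      Finsupp.single ij.1 1 + Finsupp.single ij.2 1 = fsOf ![2,0])
      = {((0:Fin 2),(0:Fin 2))} := by
  ext ⟨i, j⟩
  simp only [Finset.mem_filter, Finset.mem_univ, true_and, Finset.mem_singleton]
  fin_cases i <;> fin_cases j <;>
    simp [fin2_finsupp_eq_iff, Finsupp.single_apply, Prod.ext_iff]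

lemma filter11 :
    (Finset.univ.filter fun ij : Fin 2 × Fin 2 =>
      Finsupp.single ij.1 1 + Finsupp.single ij.2 1 = fsOf ![1,1])
      = {((0:Fin 2),(1:Fin 2)), ((1:Fin 2),(0:Fin 2))} := by
  ext ⟨i, j⟩
  simp only [Finset.mem_filter, Finset.mem_univ, true_and, Finset.mem_insert,
    Finset.mem_singleton]
  fin_cases i <;> fin_cases j <;>
    simp [fin2_finsupp_eq_iff, Finsupp.single_apply, Prod.ext_iff]

lemma filter02 :
    (Finset.univ.filter fun ij : Fin 2 × Fin 2 =>
      Finsupp.single ij.1 1 + Finsupp.single ij.2 1 = fsOf ![0,2])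
      = {((1:Fin 2),(1:Fin 2))} := by
  ext ⟨i, j⟩
  simp only [Finset.mem_filter, Finset.mem_univ, true_and, Finset.mem_singleton]
  fin_cases i <;> fin_cases j <;>
    simp [fin2_finsupp_eq_iff, Finsupp.single_apply, Prod.ext_iff]

lemma qPoly20 : qPoly (fsOf ![2,0]) = q20 := by
  rw [qPoly, filter20]
  simp [q20]

lemma qPoly02 : qPoly (fsOf ![0,2]) = q02 := by
  rw [qPoly, filter02]
  simp [q02]

lemma qPoly11 : qPoly (fsOf ![1,1]) = q11 := by
  rw [qPoly, filter11]
  rw [Finset.sum_insert (by decide), Finset.sum_singleton]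
  have hc : (({((0:Fin 2),(1:Fin 2)), ((1:Fin 2),(0:Fin 2))} : Finset (Fin 2 × Fin 2)).card) = 2 := by
    decide
  rw [hc, q11, smul_eq_C_mul]
  norm_num

/-- The three `ρ`-variable indices of `F(n,2)`. -/
def vv3 : Fin 3 → {d : Fin 2 →₀ ℕ // ∑ i, d i = 2} :=
  ![⟨fsOf ![2,0], by rw [fsOf_sum2]⟩, ⟨fsOf ![1,1], by rw [fsOf_sum2]⟩,
    ⟨fsOf ![0,2], by rw [fsOf_sum2]⟩]

def idx3 (a : {d : Fin 2 →₀ ℕ // ∑ i, d i = 2}) : Fin 3 :=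
  if a.1 0 = 2 then 0 else if a.1 0 = 1 then 1 else 2

lemma vv3_idx3 (a : {d : Fin 2 →₀ ℕ // ∑ i, d i = 2}) : vv3 (idx3 a) = a := by
  have h : a.1 0 + a.1 1 = 2 := by have := a.2; rwa [Fin.sum_univ_two] at this
  apply Subtype.ext
  rw [idx3]
  split_ifs with h2 h1
  · show (vv3 0).1 = a.1
    rw [fin2_finsupp_eq_iff]
    simp only [vv3, Matrix.cons_val_zero]
    constructor <;> simp <;> omega
  · show (vv3 1).1 = a.1
    rw [fin2_finsupp_eq_iff]
    simp only [vv3, Matrix.cons_val_one, Matrix.head_cons]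
    constructor <;> simp <;> omega
  · show (vv3 2).1 = a.1
    rw [fin2_finsupp_eq_iff]
    simp only [vv3]
    constructor <;> simp <;> omega

lemma qPoly_vv3 (i : Fin 3) : qPoly (vv3 i).1 = ![q20, q11, q02] i := by
  fin_cases i
  · exact qPoly20
  · exact qPoly11
  · exact qPoly02

/-- `x`-part exponent of `pPoly β`. -/
def xIdx (b : Fin 2 →₀ ℕ) : (Fin 2 × Fin 2) →₀ ℕ :=
  Finsupp.single (0,0) (b 0) + Finsupp.single (0,1) (b 1)

def yIdx (b : Fin 2 →₀ ℕ) : (Fin 2 × Fin 2) →₀ ℕ :=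
  Finsupp.single (1,0) (b 0) + Finsupp.single (1,1) (b 1)

lemma pPoly_two (b : Fin 2 →₀ ℕ) :
    pPoly b = monomial (xIdx b) 1 + monomial (yIdx b) 1 := by
  rw [pPoly]
  congr 1
  · rw [Fin.prod_univ_two, X_pow_eq_monomial, X_pow_eq_monomial, monomial_mul, mul_one, xIdx]
  · rw [Fin.prod_univ_two, X_pow_eq_monomial, X_pow_eq_monomial, monomial_mul, mul_one, yIdx]

lemma coeff_xIdx_pPoly {n' : ℕ} (hn' : n' ≠ 0) (b bb : Fin 2 →₀ ℕ) (hb : b 0 + b 1 = n') :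
    coeff (xIdx b) (pPoly bb) = if bb = b then 1 else 0 := by
  rw [pPoly_two, coeff_add, coeff_monomial, coeff_monomial]
  have hy : yIdx bb ≠ xIdx b := by
    intro h
    have e0 := DFunLike.congr_fun h ((0:Fin 2),(0:Fin 2))
    have e1 := DFunLike.congr_fun h ((0:Fin 2),(1:Fin 2))
    simp [xIdx, yIdx, Finsupp.single_apply, Prod.ext_iff] at e0 e1
    omega
  rw [if_neg hy, add_zero]
  have hiff : xIdx bb = xIdx b ↔ bb = b := by
    constructor
    · intro h
      rw [fin2_finsupp_eq_iff]
      have e0 := DFunLike.congr_fun h ((0:Fin 2),(0:Fin 2))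
      have e1 := DFunLike.congr_fun h ((0:Fin 2),(1:Fin 2))
      simp [xIdx, Finsupp.single_apply, Prod.ext_iff] at e0 e1
      exact ⟨e0, e1⟩
    · intro h; rw [h]
  simp [hiff]

/-- The `y`-weight. -/
def wy : Fin 2 × Fin 2 → ℕ := fun v => if v.1 = 1 then 1 else 0

lemma wy_weight_single (u : Fin 2 × Fin 2) (k : ℕ) :
    Finsupp.weight wy (Finsupp.single u k) = k * wy u := by
  rw [Finsupp.weight_apply, Finsupp.sum_single_index] <;> simp

lemma wy_xIdx (b : Fin 2 →₀ ℕ) : Finsupp.weight wy (xIdx b) = 0 := by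
  rw [xIdx, map_add, wy_weight_single, wy_weight_single]
  simp [wy]

lemma qPoly_wy (α : Fin 2 →₀ ℕ) : IsWeightedHomogeneous wy (qPoly α) 1 := by
  rw [qPoly, smul_eq_C_mul]
  have hs : IsWeightedHomogeneous wy
      (∑ ij ∈ Finset.univ.filter (fun ij : Fin 2 × Fin 2 =>
        Finsupp.single ij.1 1 + Finsupp.single ij.2 1 = α),
        (X (0, ij.1) * X (1, ij.2) : PolyVm 2)) 1 := by
    refine IsWeightedHomogeneous.sum _ _ _ fun ij _ => ?_
    have h1 : IsWeightedHomogeneous wy (X ((0 : Fin 2), ij.1) : PolyVm 2) 0 := by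
      have := isWeightedHomogeneous_X ℂ wy ((0 : Fin 2), ij.1)
      simpa [wy] using this
    have h2 : IsWeightedHomogeneous wy (X ((1 : Fin 2), ij.2) : PolyVm 2) 1 := by
      have := isWeightedHomogeneous_X ℂ wy ((1 : Fin 2), ij.2)
      simpa [wy] using this
    simpa using h1.mul h2
  simpa using (isWeightedHomogeneous_C wy _).mul hs

lemma wh_pow {σ : Type*} {w : σ → ℕ} {p : MvPolynomial σ ℂ}
    (h : IsWeightedHomogeneous w p 1) (k : ℕ) : IsWeightedHomogeneous w (p ^ k) k := by
  induction k with
  | zero => simpa using isWeightedHomogeneous_one ℂ w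
  | succ k ih => rw [pow_succ]; exact ih.mul h


/-- Every homogeneous element of `ker φ(n,2)` of degree `< n+2` (for the grading
`deg ρ = 2`, `deg π = n`) is zero, i.e. the homogeneous component `ker φ(n,2)_d`
vanishes for `d < n+2`; in particular `q_{2,0}, q_{1,1}, q_{0,2}` are algebraically
independent over `ℂ`. -/
theorem ker_phi_two_vanishes_below_degree_n_add_two
    (n : ℕ) (hn : 3 ≤ n) (ω : ℂ) (hω : IsPrimitiveRoot ω n) :
    (∀ f ∈ RingHom.ker (phi n 2), ∀ d : ℕ,
        f.IsWeightedHomogeneous (wF n 2) d → d < n + 2 → f = 0) ∧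
    AlgebraicIndependent ℂ ![q20, q11, q02] := by
  constructor
  · intro f hf d hhom hd
    have hker : phi n 2 f = 0 := hf
    -- weighted degree bound for partial sums
    have hgen : ∀ m ∈ f.support, ∀ s : Finset (FVar n 2),
        ∑ v ∈ s, m v * wF n 2 v ≤ d := by
      intro m hm s
      have h := hhom (mem_support_iff.mp hm)
      rw [Finsupp.weight_apply, Finsupp.sum] at h
      simp only [smul_eq_mul] at h
      calc ∑ v ∈ s, m v * wF n 2 v
          ≤ ∑ v ∈ s ∪ m.support, m v * wF n 2 v :=
            Finset.sum_le_sum_of_subset Finset.subset_union_left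
        _ = ∑ v ∈ m.support, m v * wF n 2 v := by
            refine (Finset.sum_subset Finset.subset_union_right fun v _ hv => ?_).symm
            rw [Finsupp.notMem_support_iff.mp hv, zero_mul]
        _ = d := h
    -- structure of monomials of f
    have hstruct : ∀ m ∈ f.support, (∀ β, m (Sum.inr β) = 0) ∨
        ∃ β, m = Finsupp.single (Sum.inr β) 1 := by
      intro m hm
      by_cases hz : ∀ β, m (Sum.inr β) = 0
      · exact Or.inl hz
      push_neg at hz
      obtain ⟨β, hβ⟩ := hz
      right
      have h1 : m (Sum.inr β) * n ≤ d := by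
        have := hgen m hm {Sum.inr β}
        simpa [wF] using this
      have hβ1 : m (Sum.inr β) = 1 := by
        rcases Nat.lt_or_ge (m (Sum.inr β)) 2 with h | h
        · omega
        · have h2n : 2 * n ≤ d := le_trans (Nat.mul_le_mul_right n h) h1
          omega
      have h2 : ∀ v, v ≠ Sum.inr β → m v = 0 := by
        intro v hv
        by_contra hmv
        have hw2 : 2 ≤ wF n 2 v := by
          cases v with
          | inl a => simp [wF]
          | inr b => simp only [wF, Sum.elim_inr]; omega
        have hs := hgen m hm {v, Sum.inr β}
        rw [Finset.sum_pair hv] at hs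
        have hmvw : 1 * 2 ≤ m v * wF n 2 v :=
          Nat.mul_le_mul (Nat.one_le_iff_ne_zero.mpr hmv) hw2
        rw [one_mul] at hmvw
        have h3 : m (Sum.inr β) * wF n 2 (Sum.inr β) = n := by simp [wF, hβ1]
        have hfin : 2 + n ≤ d := le_trans (Nat.add_le_add hmvw h3.ge) hs
        omega
      refine ⟨β, Finsupp.ext fun v => ?_⟩
      rw [Finsupp.single_apply]
      split_ifs with h
      · rw [← h]; exact hβ1
      · exact h2 v fun hh => h hh.symm
    -- expansion of phi f
    have hrep : phi n 2 f = ∑ m ∈ f.support, C (coeff m f) *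
        m.prod fun v k =>
          (Sum.elim (fun a => qPoly a.1) (fun b => pPoly b.1) v : PolyVm 2) ^ k := by
      conv_lhs => rw [f.as_sum]
      rw [phi, map_sum]
      exact Finset.sum_congr rfl fun m _ => by rw [aeval_monomial, algebraMap_eq]
    -- the pi-coefficients of f vanish
    have hcoeffA : ∀ b : {d : Fin 2 →₀ ℕ // ∑ i, d i = n},
        coeff (Finsupp.single (Sum.inr b) 1) f = 0 := by
      intro b
      have hb0 : b.1 0 + b.1 1 = n := by
        have := b.2; rwa [Fin.sum_univ_two] at this
      have hn0 : n ≠ 0 := by omega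
      have h0 : coeff (xIdx b.1) (phi n 2 f)
          = coeff (Finsupp.single (Sum.inr b) 1) f := by
        rw [hrep, coeff_sum]
        rw [Finset.sum_eq_single (Finsupp.single (Sum.inr b) (1:ℕ))]
        · rw [Finsupp.prod_single_index (by rw [pow_zero])]
          rw [pow_one, Sum.elim_inr, coeff_C_mul,
            coeff_xIdx_pPoly hn0 b.1 b.1 hb0, if_pos rfl, mul_one]
        · intro m hm hne
          rcases hstruct m hm with hfree | ⟨β', rfl⟩
          · by_cases hm0 : m = 0
            · subst hm0
              rw [Finsupp.prod_zero_index, mul_one, coeff_C]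
              rw [if_neg]
              intro hx
              have e0 := DFunLike.congr_fun hx ((0:Fin 2),(0:Fin 2))
              have e1 := DFunLike.congr_fun hx ((0:Fin 2),(1:Fin 2))
              simp [xIdx, Finsupp.single_apply, Prod.ext_iff] at e0 e1
              omega
            · have hhom2 : IsWeightedHomogeneous wy
                  (m.prod fun v k =>
                    (Sum.elim (fun a => qPoly a.1) (fun b => pPoly b.1) v : PolyVm 2) ^ k)
                  (∑ v ∈ m.support, m v) := by
                refine IsWeightedHomogeneous.prod m.support _ (fun v => m v) fun v hv => ?_
                cases v with
                | inl a => exact wh_pow (qPoly_wy a.1) (m (Sum.inl a))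
                | inr bb =>
                    exact absurd (hfree bb) (Finsupp.mem_support_iff.mp hv)
              have hhom2' : IsWeightedHomogeneous wy
                  (m.prod fun v k =>
                    (Sum.elim (fun a => qPoly a.1) (fun b => pPoly b.1) v : PolyVm 2) ^ k)
                  (∑ v ∈ m.support, m v) := hhom2
              rw [coeff_C_mul, hhom2'.coeff_eq_zero, mul_zero]
              rw [wy_xIdx]
              intro hsum
              obtain ⟨v, hv⟩ := Finsupp.ne_iff.mp hm0
              simp only [Finsupp.coe_zero, Pi.zero_apply] at hv
              have hvs : v ∈ m.support := Finsupp.mem_support_iff.mpr hv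
              have hle : m v ≤ ∑ u ∈ m.support, m u :=
                Finset.single_le_sum (fun i _ => Nat.zero_le (m i)) hvs
              omega
          · rw [Finsupp.prod_single_index (by rw [pow_zero]), pow_one, Sum.elim_inr,
              coeff_C_mul, coeff_xIdx_pPoly hn0 b.1 β'.1 hb0, if_neg, mul_zero]
            intro hval
            exact hne (by rw [Subtype.ext hval])
        · intro hnm
          rw [notMem_support_iff.mp hnm]
          simp
      rw [hker, coeff_zero] at h0
      exact h0.symm
    -- the support of f avoids the pi variables
    have hfree : ∀ m ∈ f.support, ∀ β, m (Sum.inr β) = 0 := by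
      intro m hm
      rcases hstruct m hm with h | ⟨β', rfl⟩
      · exact h
      · exact absurd (hcoeffA β') (mem_support_iff.mp hm)
    -- transfer to a polynomial in three variables
    set eta : FAlg n 2 →ₐ[ℂ] MvPolynomial (Fin 3) ℂ :=
      aeval (Sum.elim (fun a => X (idx3 a)) fun _ => 0) with heta
    set chi : MvPolynomial (Fin 3) ℂ →ₐ[ℂ] FAlg n 2 :=
      aeval (fun i => X (Sum.inl (vv3 i))) with hchi
    have hchieta : chi (eta f) = f := by
      conv_lhs => rw [f.as_sum]
      rw [map_sum, map_sum]
      conv_rhs => rw [f.as_sum]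
      refine Finset.sum_congr rfl fun m hm => ?_
      rw [monomial_eq, map_mul, map_mul]
      congr 1
      · simp [heta, hchi]
      · rw [map_finsuppProd, map_finsuppProd]
        refine Finsupp.prod_congr fun v hv => ?_
        rw [map_pow, map_pow]
        congr 1
        cases v with
        | inl a => simp [heta, hchi, vv3_idx3]
        | inr β => exact absurd (hfree m hm β) (Finsupp.mem_support_iff.mp hv)
    have hcomp : ∀ Q : MvPolynomial (Fin 3) ℂ,
        phi n 2 (chi Q) = aeval ![q20, q11, q02] Q := by
      intro Q
      rw [hchi, comp_aeval_apply]
      have hfun : (fun i => phi n 2 (X (Sum.inl (vv3 i)))) = ![q20, q11, q02] :=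
        funext fun i => by rw [phi, aeval_X, Sum.elim_inl, qPoly_vv3]
      rw [hfun]
    have hP0 : aeval ![q20, q11, q02] (eta f) = 0 := by
      rw [← hcomp, hchieta, hker]
    have hP : eta f = 0 := qIndepAux _ hP0
    rw [← hchieta, hP, map_zero]
  · exact algebraicIndependent_iff.mpr qIndepAux

end
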